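/- Let n ≥ 4 be an even integer and set m = n/2. The (m+1)-st complex derivative of the function ξ ↦ ξ/(ξ+i)^{m}, evaluated at ξ = i, equals −i^{−n−2} · 2^{−n−1} · (2·C(−m, m) + C(−m, m+1)) · (m+1)!. -/

import Mathlib

/-!
Shifting by `i`, the function is `w ↦ (w - i) / w ^ m = w ^ (1 - m) - i w ^ (-m)` near `w = 2i`,
and the `k`-th derivative of `w ^ z` is `k! C(z, k) w ^ (z - k)`. Pascal's rule
`C(1 - m, m + 1) = C(-m, m) + C(-m, m + 1)` and `(2i) ^ (-2m) = (-4) ^ (-m)` then give the formula.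
-/

open Complex

/-- Generalized binomial coefficient `C(N,K) = N(N-1)⋯(N-K+1)/K!` as a complex number. -/
noncomputable def gbinom (N : ℤ) (K : ℕ) : ℂ :=
  (∏ j ∈ Finset.range K, ((N : ℂ) - j)) / (Nat.factorial K : ℂ)

open Finset Nat

theorem prod_range_sub_eq_gbinom_mul_factorial (N : ℤ) (K : ℕ) :
    ∏ j ∈ range K, ((N : ℂ) - j) = gbinom N K * K ! :=
  (div_mul_cancel₀ _ (Nat.cast_ne_zero.mpr K.factorial_ne_zero)).symm

theorem gbinom_succ_succ (N : ℤ) (K : ℕ) :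
    gbinom (N + 1) (K + 1) = gbinom N K + gbinom N (K + 1) := by
  have hK : (K ! : ℂ) ≠ 0 := Nat.cast_ne_zero.mpr K.factorial_ne_zero
  have hshift : ∏ j ∈ range (K + 1), (((N + 1 : ℤ) : ℂ) - j) =
      (N + 1) * ∏ j ∈ range K, ((N : ℂ) - j) := by
    rw [prod_range_succ', mul_comm]
    push_cast
    simp only [add_sub_add_right_eq_sub, sub_zero]
  rw [gbinom, gbinom, gbinom, hshift, prod_range_succ, factorial_succ]
  push_cast
  field_simp
  ring

theorem iteratedDeriv_zpow_eq_gbinom (z : ℤ) (k : ℕ) (x : ℂ) :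
    iteratedDeriv k (· ^ z) x = k ! * gbinom z k * x ^ (z - k) := by
  rw [iteratedDeriv_eq_iterate, iter_deriv_zpow, prod_range_sub_eq_gbinom_mul_factorial,
    mul_comm (k ! : ℂ)]

theorem sub_div_pow_eq_zpow_sub {𝕜 : Type*} [Field 𝕜] (c : 𝕜) {w : 𝕜} (hw : w ≠ 0) (m : ℕ) :
    (w - c) / w ^ m = w ^ (1 - m : ℤ) - c * w ^ (-m : ℤ) := by
  rw [zpow_sub₀ hw, zpow_neg, zpow_one, zpow_natCast]
  ring

theorem iteratedDeriv_sub_div_pow (c : ℂ) {x : ℂ} (hx : x ≠ 0) (m k : ℕ) :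
    iteratedDeriv k (fun w => (w - c) / w ^ m) x =
      k ! * (gbinom (1 - m) k * x ^ (1 - m - k : ℤ) - c * gbinom (-m) k * x ^ (-m - k : ℤ)) := by
  have hloc : (fun w => (w - c) / w ^ m) =ᶠ[nhds x]
      fun w => w ^ (1 - m : ℤ) - c * w ^ (-m : ℤ) := by
    filter_upwards [eventually_ne_nhds hx] with w hw using sub_div_pow_eq_zpow_sub c hw m
  have hzpow (z : ℤ) : ContDiffAt ℂ k (· ^ z) x := (analyticAt_id.zpow hx).contDiffAt
  rw [hloc.iteratedDeriv_eq, iteratedDeriv_fun_sub (hzpow _) (contDiffAt_const.mul (hzpow _)),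
    iteratedDeriv_const_mul_field, iteratedDeriv_zpow_eq_gbinom, iteratedDeriv_zpow_eq_gbinom]
  ring

theorem two_mul_I_zpow_two_mul (j : ℤ) : (2 * I) ^ (2 * j) = (-4) ^ j := by
  rw [zpow_mul, zpow_two, mul_mul_mul_comm, I_mul_I]
  norm_num

theorem neg_I_zpow_mul_two_zpow (j : ℤ) :
    -I ^ (2 * j - 2) * (2 : ℂ) ^ (2 * j - 1) = (-4) ^ j / 2 := by
  rw [show 2 * j - 2 = 2 * (j - 1) by ring, zpow_mul, zpow_sub₀ two_ne_zero, zpow_mul,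
    zpow_sub₀ (by simp), zpow_one, zpow_one,
    show (-4 : ℂ) = -1 * 2 ^ 2 by norm_num, mul_zpow, zpow_ofNat, zpow_ofNat, I_sq]
  ring

theorem stmt_9_general (n m : ℕ) (hm : n = 2 * m) :
    iteratedDeriv (m + 1) (fun ξ : ℂ => ξ / (ξ + I)^m) I =
      -I ^ (-(n:ℤ) - 2) * (2:ℂ) ^ (-(n:ℤ) - 1) * (2 * gbinom (-(m:ℤ)) m + gbinom (-(m:ℤ)) (m + 1)) * (Nat.factorial (m + 1) : ℂ) := by
  have hshift : iteratedDeriv (m + 1) (fun ξ : ℂ => ξ / (ξ + I) ^ m) I =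
      iteratedDeriv (m + 1) (fun w => (w - I) / w ^ m) (2 * I) := by
    simpa [two_mul] using
      congr_fun (iteratedDeriv_comp_add_const (n := m + 1) (f := fun w => (w - I) / w ^ m) I) I
  have hpascal : gbinom (1 - m) (m + 1) = gbinom (-m) m + gbinom (-m) (m + 1) := by
    rw [← gbinom_succ_succ, neg_add_eq_sub]
  have hexp₁ : (1 : ℤ) - m - ↑(m + 1) = 2 * -m := by push_cast; ring
  have hexp₂ : -(m : ℤ) - ↑(m + 1) = 2 * -m - 1 := by push_cast; ring
  have hexp₃ : -(n : ℤ) = 2 * -m := by rw [hm]; push_cast; ring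
  rw [hshift, iteratedDeriv_sub_div_pow I (by simp) m (m + 1), hpascal, hexp₁, hexp₂, hexp₃,
    neg_I_zpow_mul_two_zpow, zpow_sub₀ (by simp), two_mul_I_zpow_two_mul, zpow_one]
  field_simp
  ring

theorem stmt_9 (n m : ℕ) (hn : 4 ≤ n) (hm : n = 2 * m) :
    iteratedDeriv (m + 1) (fun ξ : ℂ => ξ / (ξ + I)^m) I =
      -I ^ (-(n:ℤ) - 2) * (2:ℂ) ^ (-(n:ℤ) - 1) * (2 * gbinom (-(m:ℤ)) m + gbinom (-(m:ℤ)) (m + 1)) * (Nat.factorial (m + 1) : ℂ) :=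
  stmt_9_general n m hm
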